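/- arXiv:2112.11287 — 2 statements merged into one kernel-verified Lean document; each statement's English description precedes it below -/
import Mathlib

section
/- Let (u, θ) be a solution of Model D with input f ∈ C⁰(ℝ₊; L²(0,1)) ∩ C⁰((0,∞)×(0,1)). Then for every t > 0 the functional E satisfies the identity d/dt E(u[t], u_t[t], θ[t]) = −μ∫₀¹ u_t²(t,x) dx + ∫₀¹ u_t(t,x)f(t,x) dx − σ∫₀¹ u_xt²(t,x) dx − a·c²·u_t²(t,1) − (kb/λ)∫₀¹ θ_x²(t,x) dx. -/
/-!
Differentiating under the integral sign gives
`dE/dt = ∫ u_t u_tt + c² ∫ u_x u_xt + (b/λ) ∫ θ θ_t + aσ u_t(1) u_tt(1)`; the temperature term is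
differentiated through the `L²`-valued curve `t ↦ θ[t]`, whose derivative agrees a.e. with the
pointwise `θ_t`, since difference quotients converging in `L²` converge a.e. along a sequence.
Substituting the two equations and integrating by parts in `x`, the boundary conditions turn the
boundary terms into `-a c² u_t(1)² - aσ u_t(1) u_tt(1)`, and the coupling terms `b ∫ u_t θ_x` and
`b ∫ θ u_xt` cancel because `θ` vanishes at both ends.
-/

open MeasureTheory Set Filter Topology
open scoped Interval

theorem hasDerivAt_intervalIntegral_of_continuousOn {E : Type*} [NormedAddCommGroup E]
    [NormedSpace ℝ E] {F F' : ℝ → ℝ → E} {U : Set ℝ} {a b t : ℝ} (hU : U ∈ 𝓝 t)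
    (hF : ContinuousOn (fun p : ℝ × ℝ => F p.1 p.2) (U ×ˢ [[a, b]]))
    (hF' : ContinuousOn (fun p : ℝ × ℝ => F' p.1 p.2) (U ×ˢ [[a, b]]))
    (hd : ∀ s ∈ U, ∀ x ∈ [[a, b]], HasDerivAt (fun r => F r x) (F' s x) s) :
    HasDerivAt (fun s => ∫ x in a..b, F s x) (∫ x in a..b, F' t x) t := by
  obtain ⟨ε, hε, hεU⟩ := Metric.nhds_basis_closedBall.mem_iff.1 hU
  obtain ⟨C, hC⟩ := (isCompact_closedBall t ε |>.prod isCompact_uIcc).exists_bound_of_continuousOn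
    (hF'.mono (prod_mono hεU subset_rfl))
  have hslice : ∀ s ∈ U, ContinuousOn (F s) [[a, b]] := fun s hs => hF.uncurry_left s hs
  refine (intervalIntegral.hasDerivAt_integral_of_dominated_loc_of_deriv_le (bound := fun _ => C)
    (Metric.ball_mem_nhds t hε) ?_ ((hslice t (mem_of_mem_nhds hU)).intervalIntegrable)
    ((hF'.uncurry_left t (mem_of_mem_nhds hU)).mono uIoc_subset_uIcc
      |>.aestronglyMeasurable measurableSet_uIoc) ?_ intervalIntegrable_const ?_).2
  · filter_upwards [hU] with s hs
    exact (hslice s hs).mono uIoc_subset_uIcc |>.aestronglyMeasurable measurableSet_uIoc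
  · exact Eventually.of_forall fun x hx s hs =>
      hC (s, x) ⟨Metric.ball_subset_closedBall hs, uIoc_subset_uIcc hx⟩
  · exact Eventually.of_forall fun x hx s hs =>
      hd s (hεU (Metric.ball_subset_closedBall hs)) x (uIoc_subset_uIcc hx)

theorem hasDerivAt_intervalIntegral_sq {F F' : ℝ → ℝ → ℝ} {a b t₀ t : ℝ} (hab : a ≤ b)
    (ht : t₀ < t) (hF : ContinuousOn (fun p : ℝ × ℝ => F p.1 p.2) (Ici t₀ ×ˢ Icc a b))
    (hF' : ContinuousOn (fun p : ℝ × ℝ => F' p.1 p.2) (Ici t₀ ×ˢ Icc a b))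
    (hd : ∀ s ∈ Ici t₀, ∀ x ∈ Icc a b,
      HasDerivWithinAt (fun r => F r x) (F' s x) (Ici t₀) s) :
    HasDerivAt (fun s => ∫ x in a..b, F s x ^ 2) (2 * ∫ x in a..b, F t x * F' t x) t := by
  rw [← intervalIntegral.integral_const_mul]
  rw [← uIcc_of_le hab] at hF hF' hd
  refine hasDerivAt_intervalIntegral_of_continuousOn (F := fun s x => F s x ^ 2)
    (F' := fun s x => 2 * (F s x * F' s x)) (Ioi_mem_nhds ht)
    ((hF.pow 2).mono (prod_mono Ioi_subset_Ici_self subset_rfl))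
    ((continuousOn_const.mul (hF.mul hF')).mono (prod_mono Ioi_subset_Ici_self subset_rfl))
    fun s hs x hx => ?_
  refine (((hd s (mem_Ici_of_Ioi hs) x hx).hasDerivAt (Ici_mem_nhds hs)).fun_pow 2).congr_deriv ?_
  push_cast; ring

theorem ae_eq_of_hasDerivAt_Lp {α E : Type*} [MeasurableSpace α] {μ : Measure α}
    [NormedAddCommGroup E] [NormedSpace ℝ E] {p : ENNReal} [Fact (1 ≤ p)]
    {Θ : ℝ → Lp E p μ} {D : Lp E p μ} {θ : ℝ → α → E} {θ' : α → E} {t : ℝ}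
    (hΘ : HasDerivAt Θ D t) (hθΘ : ∀ᶠ s in 𝓝 t, θ s =ᵐ[μ] Θ s)
    (hθ : ∀ᵐ x ∂μ, HasDerivAt (fun s => θ s x) (θ' x) t) :
    θ' =ᵐ[μ] D := by
  obtain ⟨ns, hns, hconv⟩ :=
    (tendstoInMeasure_of_tendsto_Lp (hasDerivAt_iff_tendsto_slope.1 hΘ)).exists_seq_tendsto_ae'
  have hslope : ∀ s, θ s =ᵐ[μ] Θ s → ∀ᵐ x ∂μ, (slope Θ t s : α → E) x = slope (θ · x) t s := by
    intro s hs
    filter_upwards [Lp.coeFn_smul (s - t)⁻¹ (Θ s - Θ t), Lp.coeFn_sub (Θ s) (Θ t), hs,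
      hθΘ.self_of_nhds] with x h1 h2 h3 h4
    simp only [slope_def_module, h1, Pi.smul_apply, h2, Pi.sub_apply, h3, h4]
  have hev : ∀ᶠ i in atTop, θ (ns i) =ᵐ[μ] Θ (ns i) :=
    hns.eventually (eventually_nhdsWithin_of_eventually_nhds hθΘ)
  have hslope_ns : ∀ᵐ x ∂μ, ∀ i, θ (ns i) =ᵐ[μ] Θ (ns i) →
      (slope Θ t (ns i) : α → E) x = slope (θ · x) t (ns i) := by
    refine ae_all_iff.2 fun i => ?_
    by_cases hi : θ (ns i) =ᵐ[μ] Θ (ns i)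
    · exact (hslope _ hi).mono fun x hx _ => hx
    · exact Eventually.of_forall fun x h => absurd h hi
  filter_upwards [hconv, hθ, hslope_ns] with x hDx hθx hx
  refine tendsto_nhds_unique ((hasDerivAt_iff_tendsto_slope.1 hθx).comp hns) (hDx.congr' ?_)
  filter_upwards [hev] with i hi
  exact hx i hi

theorem hasDerivAt_integral_sq_of_hasDerivAt_L2 {α : Type*} [MeasurableSpace α] {μ : Measure α}
    {Θ : ℝ → Lp ℝ 2 μ} {D : Lp ℝ 2 μ} {θ : ℝ → α → ℝ} {θ' : α → ℝ} {t : ℝ}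
    (hΘ : HasDerivAt Θ D t) (hθΘ : ∀ᶠ s in 𝓝 t, θ s =ᵐ[μ] Θ s) (hθ' : θ' =ᵐ[μ] D) :
    HasDerivAt (fun s => ∫ x, θ s x ^ 2 ∂μ) (2 * ∫ x, θ t x * θ' x ∂μ) t := by
  have hinner : ∀ s, θ s =ᵐ[μ] Θ s → ∀ {g : α → ℝ} {G : Lp ℝ 2 μ}, g =ᵐ[μ] G →
      ∫ x, θ s x * g x ∂μ = inner ℝ (Θ s) G := by
    intro s hs g G hg
    rw [L2.inner_def]
    refine integral_congr_ae ?_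
    filter_upwards [hs, hg] with x h1 h2
    rw [h1, h2, Real.inner_apply]
  rw [hinner t hθΘ.self_of_nhds hθ']
  refine hΘ.norm_sq.congr_of_eventuallyEq ?_
  filter_upwards [hθΘ] with s hs
  rw [← real_inner_self_eq_norm_sq, ← hinner s hs hs]
  simp only [sq]

theorem hasDerivAt_intervalIntegral_sq_of_hasDerivAt_L2 {a b t : ℝ}
    {Θ : ℝ → Lp ℝ 2 (volume.restrict (Ioo a b))} {D : Lp ℝ 2 (volume.restrict (Ioo a b))}
    {θ : ℝ → ℝ → ℝ} {θ' : ℝ → ℝ} (hab : a ≤ b) (hΘ : HasDerivAt Θ D t)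
    (hθΘ : ∀ᶠ s in 𝓝 t, θ s =ᵐ[volume.restrict (Ioo a b)] Θ s)
    (hθ : ∀ x ∈ Ioo a b, HasDerivAt (fun s => θ s x) (θ' x) t) :
    HasDerivAt (fun s => ∫ x in a..b, θ s x ^ 2) (2 * ∫ x in a..b, θ t x * θ' x) t := by
  simp only [intervalIntegral.integral_of_le hab, integral_Ioc_eq_integral_Ioo]
  exact hasDerivAt_integral_sq_of_hasDerivAt_L2 hΘ hθΘ <| ae_eq_of_hasDerivAt_Lp hΘ hθΘ <|
    (ae_restrict_iff' measurableSet_Ioo).2 (Eventually.of_forall hθ)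

theorem IntervalIntegrable.of_sq {g : ℝ → ℝ} {a b : ℝ} (hab : a ≤ b)
    (hg : AEStronglyMeasurable g (volume.restrict (Ioo a b)))
    (hsq : IntervalIntegrable (fun x => g x ^ 2) volume a b) : IntervalIntegrable g volume a b := by
  rw [intervalIntegrable_iff_integrableOn_Ioo_of_le hab] at hsq ⊢
  exact ((memLp_two_iff_integrable_sq hg).2 hsq).integrable one_le_two

theorem aestronglyMeasurable_of_hasDerivWithinAt_Icc {f g : ℝ → ℝ} {a b : ℝ}
    (h : ∀ x ∈ Icc a b, HasDerivWithinAt f (g x) (Icc a b) x) :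
    AEStronglyMeasurable g (volume.restrict (Ioo a b)) :=
  (measurable_deriv f).aestronglyMeasurable.congr <| (ae_restrict_iff' measurableSet_Ioo).2 <|
    Eventually.of_forall fun x hx =>
      ((h x (Ioo_subset_Icc_self hx)).hasDerivAt (Icc_mem_nhds hx.1 hx.2)).deriv

theorem integral_mul_eq_of_dampedWave {v v' vx vxx w w' h : ℝ → ℝ} {a b c σ μ : ℝ} (hab : a ≤ b)
    (hv : ∀ x ∈ Icc a b, HasDerivWithinAt v (vx x) (Icc a b) x)
    (hvx : ∀ x ∈ Icc a b, HasDerivWithinAt vx (vxx x) (Icc a b) x)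
    (hw : ∀ x ∈ Icc a b, HasDerivWithinAt w (w' x) (Icc a b) x)
    (hw' : ContinuousOn w' (Icc a b)) (hvxx : IntervalIntegrable vxx volume a b)
    (hvh : IntervalIntegrable (fun x => v x * h x) volume a b)
    (hpde : ∀ x ∈ Ioo a b, v' x = c ^ 2 * w' x + σ * vxx x - μ * v x + h x) :
    (∫ x in a..b, v x * v' x) + c ^ 2 * (∫ x in a..b, w x * vx x) =
      c ^ 2 * (v b * w b - v a * w a) + σ * (v b * vx b - v a * vx a)
        - σ * (∫ x in a..b, vx x ^ 2) - μ * (∫ x in a..b, v x ^ 2) + ∫ x in a..b, v x * h x := by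
  rw [← uIcc_of_le hab] at hv hvx hw hw'
  have cv : ContinuousOn v [[a, b]] := fun x hx => (hv x hx).continuousWithinAt
  have cvx : ContinuousOn vx [[a, b]] := fun x hx => (hvx x hx).continuousWithinAt
  have ivw' : IntervalIntegrable (fun x => v x * w' x) volume a b := (cv.mul hw').intervalIntegrable
  have ivvxx : IntervalIntegrable (fun x => v x * vxx x) volume a b := hvxx.continuousOn_mul cv
  have ivv : IntervalIntegrable (fun x => v x ^ 2) volume a b := (cv.pow 2).intervalIntegrable
  have hsplit : ∫ x in a..b, v x * v' x = c ^ 2 * (∫ x in a..b, v x * w' x)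
      + σ * (∫ x in a..b, v x * vxx x) - μ * (∫ x in a..b, v x ^ 2) + ∫ x in a..b, v x * h x := by
    rw [intervalIntegral.integral_congr_Ioo_of_le hab (g := fun x => c ^ 2 * (v x * w' x)
        + σ * (v x * vxx x) - μ * v x ^ 2 + v x * h x) fun x hx => by simp only [hpde x hx]; ring,
      intervalIntegral.integral_add
        (((ivw'.const_mul _).add (ivvxx.const_mul _)).sub (ivv.const_mul _)) hvh,
      intervalIntegral.integral_sub ((ivw'.const_mul _).add (ivvxx.const_mul _)) (ivv.const_mul _),
      intervalIntegral.integral_add (ivw'.const_mul _) (ivvxx.const_mul _),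
      intervalIntegral.integral_const_mul, intervalIntegral.integral_const_mul,
      intervalIntegral.integral_const_mul]
  have ibp_w := intervalIntegral.integral_mul_deriv_eq_deriv_mul_of_hasDerivWithinAt hv hw
    cvx.intervalIntegrable hw'.intervalIntegrable
  have ibp_vx := intervalIntegral.integral_mul_deriv_eq_deriv_mul_of_hasDerivWithinAt hv hvx
    cvx.intervalIntegrable hvxx
  simp only [mul_comm (vx _) (w _), ← sq] at ibp_w ibp_vx
  linear_combination hsplit + c ^ 2 * ibp_w + σ * ibp_vx

theorem integral_mul_eq_of_heat {ϑ ϑ' ϑx ϑxx r : ℝ → ℝ} {a b k : ℝ} (hab : a ≤ b)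
    (hϑ : ∀ x ∈ Icc a b, HasDerivWithinAt ϑ (ϑx x) (Icc a b) x)
    (hϑx : ∀ x ∈ Icc a b, HasDerivWithinAt ϑx (ϑxx x) (Icc a b) x)
    (hϑxx : IntervalIntegrable ϑxx volume a b)
    (hϑr : IntervalIntegrable (fun x => ϑ x * r x) volume a b)
    (hpde : ∀ x ∈ Ioo a b, ϑ' x = k * ϑxx x + r x) :
    ∫ x in a..b, ϑ x * ϑ' x =
      k * (ϑ b * ϑx b - ϑ a * ϑx a) - k * (∫ x in a..b, ϑx x ^ 2) + ∫ x in a..b, ϑ x * r x := by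
  rw [← uIcc_of_le hab] at hϑ hϑx
  have cϑ : ContinuousOn ϑ [[a, b]] := fun x hx => (hϑ x hx).continuousWithinAt
  have cϑx : ContinuousOn ϑx [[a, b]] := fun x hx => (hϑx x hx).continuousWithinAt
  have ibp := intervalIntegral.integral_mul_deriv_eq_deriv_mul_of_hasDerivWithinAt hϑ hϑx
    cϑx.intervalIntegrable hϑxx
  simp only [← sq] at ibp
  rw [intervalIntegral.integral_congr_Ioo_of_le hab (g := fun x => k * (ϑ x * ϑxx x) + ϑ x * r x)
      fun x hx => by simp only [hpde x hx]; ring,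
    intervalIntegral.integral_add ((hϑxx.continuousOn_mul cϑ).const_mul _) hϑr,
    intervalIntegral.integral_const_mul, ibp]
  ring

theorem thermoelasticString_energy_identity {v v' vx vxx w w' ϑ ϑ' ϑx ϑxx g : ℝ → ℝ}
    {a c μ σ b k lam : ℝ} (hlam : lam ≠ 0)
    (hv : ∀ x ∈ Icc 0 1, HasDerivWithinAt v (vx x) (Icc 0 1) x)
    (hvx : ∀ x ∈ Icc 0 1, HasDerivWithinAt vx (vxx x) (Icc 0 1) x)
    (hw : ∀ x ∈ Icc 0 1, HasDerivWithinAt w (w' x) (Icc 0 1) x)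
    (hϑ : ∀ x ∈ Icc 0 1, HasDerivWithinAt ϑ (ϑx x) (Icc 0 1) x)
    (hϑx : ∀ x ∈ Icc 0 1, HasDerivWithinAt ϑx (ϑxx x) (Icc 0 1) x)
    (hw' : ContinuousOn w' (Icc 0 1)) (hvxx : IntervalIntegrable vxx volume 0 1)
    (hϑxx : IntervalIntegrable ϑxx volume 0 1)
    (hg : IntervalIntegrable g volume 0 1)
    (hpde₁ : ∀ x ∈ Ioo 0 1, v' x = c ^ 2 * w' x + σ * vxx x - μ * v x - b * ϑx x + g x)
    (hpde₂ : ∀ x ∈ Ioo 0 1, ϑ' x = k * ϑxx x - lam * vx x)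
    (hv0 : v 0 = 0) (hw1 : w 1 = -a * v 1) (hvx1 : vx 1 = -a * v' 1)
    (hϑ0 : ϑ 0 = 0) (hϑ1 : ϑ 1 = 0) :
    (∫ x in (0:ℝ)..1, v x * v' x) + c ^ 2 * (∫ x in (0:ℝ)..1, w x * vx x)
        + b / lam * (∫ x in (0:ℝ)..1, ϑ x * ϑ' x) + a * σ * (v 1 * v' 1) =
      -μ * (∫ x in (0:ℝ)..1, v x ^ 2) + (∫ x in (0:ℝ)..1, v x * g x)
        - σ * (∫ x in (0:ℝ)..1, vx x ^ 2) - a * c ^ 2 * v 1 ^ 2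
        - k * b / lam * (∫ x in (0:ℝ)..1, ϑx x ^ 2) := by
  have cv : ContinuousOn v (Icc 0 1) := fun x hx => (hv x hx).continuousWithinAt
  have cvx : ContinuousOn vx (Icc 0 1) := fun x hx => (hvx x hx).continuousWithinAt
  have cϑ : ContinuousOn ϑ (Icc 0 1) := fun x hx => (hϑ x hx).continuousWithinAt
  have cϑx : ContinuousOn ϑx (Icc 0 1) := fun x hx => (hϑx x hx).continuousWithinAt
  rw [← uIcc_of_le zero_le_one] at cv cvx cϑ cϑx
  have ivϑx : IntervalIntegrable (fun x => v x * ϑx x) volume 0 1 := (cv.mul cϑx).intervalIntegrable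
  have iϑvx : IntervalIntegrable (fun x => ϑ x * vx x) volume 0 1 := (cϑ.mul cvx).intervalIntegrable
  have hvg : IntervalIntegrable (fun x => v x * g x) volume 0 1 := hg.continuousOn_mul cv
  have wave := integral_mul_eq_of_dampedWave (v' := v') (c := c) (σ := σ) (μ := μ)
    (h := fun x => -b * ϑx x + g x) zero_le_one hv hvx hw hw' hvxx
    (by simpa only [mul_add, mul_left_comm] using (ivϑx.const_mul (-b)).add hvg)
    fun x hx => by rw [hpde₁ x hx]; ring
  have heat := integral_mul_eq_of_heat (ϑ' := ϑ') (k := k) (r := fun x => -lam * vx x)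
    zero_le_one hϑ hϑx hϑxx
    (by simpa only [mul_left_comm] using iϑvx.const_mul (-lam)) fun x hx => by rw [hpde₂ x hx]; ring
  have coupling := intervalIntegral.integral_mul_deriv_eq_deriv_mul_of_hasDerivWithinAt
    (uIcc_of_le (zero_le_one' ℝ) ▸ hϑ) (uIcc_of_le (zero_le_one' ℝ) ▸ hv)
    cϑx.intervalIntegrable cvx.intervalIntegrable
  simp only [mul_add, mul_left_comm (v _) (-b), mul_left_comm (ϑ _) (-lam)] at wave heat
  rw [intervalIntegral.integral_add (ivϑx.const_mul _) hvg, intervalIntegral.integral_const_mul]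
    at wave
  rw [intervalIntegral.integral_const_mul] at heat
  simp only [mul_comm (ϑx _) (v _)] at coupling
  simp only [hv0, hw1, hvx1, hϑ0, hϑ1] at wave heat coupling
  field_simp
  linear_combination lam * wave + b * heat - b * lam * coupling

theorem stmt14_general (a c μ σ b k lam : ℝ) (hlam : 0 < lam)
    (u ut ux utt uxx uxt uxxt θ θt θx θxx f : ℝ → ℝ → ℝ)
    (hut_c : ContinuousOn (fun p : ℝ × ℝ => ut p.1 p.2) (Set.Ici 0 ×ˢ Set.Icc 0 1))
    (hux_c : ContinuousOn (fun p : ℝ × ℝ => ux p.1 p.2) (Set.Ici 0 ×ˢ Set.Icc 0 1))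
    (hutt_c : ContinuousOn (fun p : ℝ × ℝ => utt p.1 p.2) (Set.Ici 0 ×ˢ Set.Icc 0 1))
    (huxx_c : ContinuousOn (fun p : ℝ × ℝ => uxx p.1 p.2) (Set.Ici 0 ×ˢ Set.Icc 0 1))
    (huxt_c : ContinuousOn (fun p : ℝ × ℝ => uxt p.1 p.2) (Set.Ici 0 ×ˢ Set.Icc 0 1))
    (hut_d : ∀ t ∈ Set.Ici (0:ℝ), ∀ x ∈ Set.Icc (0:ℝ) 1,
      HasDerivWithinAt (fun s => u s x) (ut t x) (Set.Ici 0) t)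
    (hutt_d : ∀ t ∈ Set.Ici (0:ℝ), ∀ x ∈ Set.Icc (0:ℝ) 1,
      HasDerivWithinAt (fun s => ut s x) (utt t x) (Set.Ici 0) t)
    (huxx_d : ∀ t ∈ Set.Ici (0:ℝ), ∀ x ∈ Set.Icc (0:ℝ) 1,
      HasDerivWithinAt (fun y => ux t y) (uxx t x) (Set.Icc 0 1) x)
    (huxt_d : ∀ t ∈ Set.Ici (0:ℝ), ∀ x ∈ Set.Icc (0:ℝ) 1,
      HasDerivWithinAt (fun y => ut t y) (uxt t x) (Set.Icc 0 1) x ∧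
      HasDerivWithinAt (fun s => ux s x) (uxt t x) (Set.Ici 0) t)
    (hutH2 : ∀ t ∈ Set.Ioi (0:ℝ), ∀ x ∈ Set.Icc (0:ℝ) 1,
      HasDerivWithinAt (fun y => uxt t y) (uxxt t x) (Set.Icc 0 1) x)
    (huxxt_int : ∀ t ∈ Set.Ioi (0:ℝ), IntervalIntegrable (fun x => (uxxt t x)^2) MeasureTheory.volume 0 1)
    (hθt_d : ∀ t ∈ Set.Ioi (0:ℝ), ∀ x ∈ Set.Ioo (0:ℝ) 1,
      HasDerivAt (fun s => θ s x) (θt t x) t)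
    (hθ_L2 : ∃ Θ DΘ : ℝ → MeasureTheory.Lp ℝ 2 (MeasureTheory.volume.restrict (Set.Ioo (0:ℝ) 1)),
      (∀ t ∈ Set.Ioi (0:ℝ), HasDerivAt Θ (DΘ t) t) ∧ ContinuousOn DΘ (Set.Ioi 0) ∧
      ∀ t ∈ Set.Ici (0:ℝ),
        (fun x => θ t x) =ᵐ[MeasureTheory.volume.restrict (Set.Ioo (0:ℝ) 1)] (Θ t : ℝ → ℝ))
    (hθx_d : ∀ t ∈ Set.Ioi (0:ℝ), ∀ x ∈ Set.Icc (0:ℝ) 1,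
      HasDerivWithinAt (fun y => θ t y) (θx t x) (Set.Icc 0 1) x)
    (hθxx_d : ∀ t ∈ Set.Ioi (0:ℝ), ∀ x ∈ Set.Icc (0:ℝ) 1,
      HasDerivWithinAt (fun y => θx t y) (θxx t x) (Set.Icc 0 1) x)
    (hθxx_int : ∀ t ∈ Set.Ioi (0:ℝ), IntervalIntegrable (fun x => (θxx t x)^2) MeasureTheory.volume 0 1)
    (hpde1 : ∀ t ∈ Set.Ioi (0:ℝ), ∀ x ∈ Set.Ioo (0:ℝ) 1,
      utt t x = c^2 * uxx t x + σ * uxxt t x - μ * ut t x - b * θx t x + f t x)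
    (hpde2 : ∀ t ∈ Set.Ioi (0:ℝ), ∀ x ∈ Set.Ioo (0:ℝ) 1,
      θt t x = k * θxx t x - lam * uxt t x)
    (hbc0 : ∀ t ∈ Set.Ioi (0:ℝ), u t 0 = 0)
    (hbc1 : ∀ t ∈ Set.Ioi (0:ℝ), ux t 1 = -a * ut t 1)
    (hbcθ : ∀ t ∈ Set.Ioi (0:ℝ), θ t 0 = 0 ∧ θ t 1 = 0)
    (hf_c : ContinuousOn (fun p : ℝ × ℝ => f p.1 p.2) (Set.Ioi 0 ×ˢ Set.Ioo 0 1))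
    (hf_int : ∀ t ∈ Set.Ici (0:ℝ), IntervalIntegrable (fun x => (f t x)^2) MeasureTheory.volume 0 1) :
    ∀ t ∈ Set.Ioi (0:ℝ),
      HasDerivAt (fun s => (1/2) * (∫ x in (0:ℝ)..1, (ut s x)^2) + (c^2/2) * (∫ x in (0:ℝ)..1, (ux s x)^2) +
        (b/(2*lam)) * (∫ x in (0:ℝ)..1, (θ s x)^2) + (a*σ/2) * (ut s 1)^2)
        (-μ * (∫ x in (0:ℝ)..1, (ut t x)^2) + (∫ x in (0:ℝ)..1, ut t x * f t x) -
          σ * (∫ x in (0:ℝ)..1, (uxt t x)^2) - a * c^2 * (ut t 1)^2 -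
          (k*b/lam) * (∫ x in (0:ℝ)..1, (θx t x)^2)) t := by
  intro t (ht : 0 < t)
  obtain ⟨Θ, DΘ, hΘ, -, hθΘ⟩ := hθ_L2
  have h0 : (0:ℝ) ∈ Icc (0:ℝ) 1 := left_mem_Icc.2 zero_le_one
  have h1 : (1:ℝ) ∈ Icc (0:ℝ) 1 := right_mem_Icc.2 zero_le_one
  have hdut := hasDerivAt_intervalIntegral_sq zero_le_one ht hut_c hutt_c hutt_d
  have hdux := hasDerivAt_intervalIntegral_sq zero_le_one ht hux_c huxt_c
    fun s hs x hx => (huxt_d s hs x hx).2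
  have hdθ := hasDerivAt_intervalIntegral_sq_of_hasDerivAt_L2 zero_le_one (hΘ t ht)
    (eventually_of_mem (Ici_mem_nhds ht) hθΘ) (hθt_d t ht)
  have hdut1 : HasDerivAt (fun s => ut s 1) (utt t 1) t :=
    (hutt_d t ht.le 1 h1).hasDerivAt (Ici_mem_nhds ht)
  have hut0 : ut t 0 = 0 := ((hut_d t ht.le 0 h0).hasDerivAt (Ici_mem_nhds ht)).unique
    ((hasDerivAt_const t 0).congr_of_eventuallyEq (eventually_of_mem (Ioi_mem_nhds ht) hbc0))
  have huxt1 : uxt t 1 = -a * utt t 1 :=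
    ((huxt_d t ht.le 1 h1).2.hasDerivAt (Ici_mem_nhds ht)).unique
      ((hdut1.const_mul (-a)).congr_of_eventuallyEq (eventually_of_mem (Ioi_mem_nhds ht) hbc1))
  have energy := thermoelasticString_energy_identity hlam.ne' (fun x hx => (huxt_d t ht.le x hx).1)
    (hutH2 t ht) (huxx_d t ht.le) (hθx_d t ht) (hθxx_d t ht) (huxx_c.uncurry_left t ht.le)
    (.of_sq zero_le_one (aestronglyMeasurable_of_hasDerivWithinAt_Icc (hutH2 t ht))
      (huxxt_int t ht))
    (.of_sq zero_le_one (aestronglyMeasurable_of_hasDerivWithinAt_Icc (hθxx_d t ht))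
      (hθxx_int t ht))
    (.of_sq zero_le_one ((hf_c.uncurry_left t ht).aestronglyMeasurable measurableSet_Ioo)
      (hf_int t ht.le))
    (hpde1 t ht) (hpde2 t ht) hut0 (hbc1 t ht) huxt1 (hbcθ t ht).1 (hbcθ t ht).2
  refine ((((hdut.const_mul (1/2 : ℝ)).add (hdux.const_mul (c^2/2))).add
    (hdθ.const_mul (b/(2*lam)))).add ((hdut1.fun_pow 2).const_mul (a*σ/2))).congr_deriv ?_
  simp only [Nat.cast_ofNat, Nat.reduceSub, pow_one]
  linear_combination energy

theorem stmt14 (a c μ σ b k lam : ℝ) (ha : 0 < a) (hc : 0 < c) (hμ : 0 ≤ μ)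
    (hσ : 0 < σ) (hb : 0 < b) (hk : 0 < k) (hlam : 0 < lam)
    (u ut ux utt uxx uxt uxxt θ θt θx θxx f : ℝ → ℝ → ℝ)
    (hu_c : ContinuousOn (fun p : ℝ × ℝ => u p.1 p.2) (Set.Ici 0 ×ˢ Set.Icc 0 1))
    (hut_c : ContinuousOn (fun p : ℝ × ℝ => ut p.1 p.2) (Set.Ici 0 ×ˢ Set.Icc 0 1))
    (hux_c : ContinuousOn (fun p : ℝ × ℝ => ux p.1 p.2) (Set.Ici 0 ×ˢ Set.Icc 0 1))
    (hutt_c : ContinuousOn (fun p : ℝ × ℝ => utt p.1 p.2) (Set.Ici 0 ×ˢ Set.Icc 0 1))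
    (huxx_c : ContinuousOn (fun p : ℝ × ℝ => uxx p.1 p.2) (Set.Ici 0 ×ˢ Set.Icc 0 1))
    (huxt_c : ContinuousOn (fun p : ℝ × ℝ => uxt p.1 p.2) (Set.Ici 0 ×ˢ Set.Icc 0 1))
    (hut_d : ∀ t ∈ Set.Ici (0:ℝ), ∀ x ∈ Set.Icc (0:ℝ) 1,
      HasDerivWithinAt (fun s => u s x) (ut t x) (Set.Ici 0) t)
    (hux_d : ∀ t ∈ Set.Ici (0:ℝ), ∀ x ∈ Set.Icc (0:ℝ) 1,
      HasDerivWithinAt (fun y => u t y) (ux t x) (Set.Icc 0 1) x)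
    (hutt_d : ∀ t ∈ Set.Ici (0:ℝ), ∀ x ∈ Set.Icc (0:ℝ) 1,
      HasDerivWithinAt (fun s => ut s x) (utt t x) (Set.Ici 0) t)
    (huxx_d : ∀ t ∈ Set.Ici (0:ℝ), ∀ x ∈ Set.Icc (0:ℝ) 1,
      HasDerivWithinAt (fun y => ux t y) (uxx t x) (Set.Icc 0 1) x)
    (huxt_d : ∀ t ∈ Set.Ici (0:ℝ), ∀ x ∈ Set.Icc (0:ℝ) 1,
      HasDerivWithinAt (fun y => ut t y) (uxt t x) (Set.Icc 0 1) x ∧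
      HasDerivWithinAt (fun s => ux s x) (uxt t x) (Set.Ici 0) t)
    (huxxt_d : ∀ t ∈ Set.Ioi (0:ℝ), ∀ x ∈ Set.Ioo (0:ℝ) 1,
      HasDerivAt (fun s => uxx s x) (uxxt t x) t)
    (hutH2 : ∀ t ∈ Set.Ioi (0:ℝ), ∀ x ∈ Set.Icc (0:ℝ) 1,
      HasDerivWithinAt (fun y => uxt t y) (uxxt t x) (Set.Icc 0 1) x)
    (huxxt_int : ∀ t ∈ Set.Ioi (0:ℝ), IntervalIntegrable (fun x => (uxxt t x)^2) MeasureTheory.volume 0 1)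
    (hθ_c : ContinuousOn (fun p : ℝ × ℝ => θ p.1 p.2) (Set.Ici 0 ×ˢ Set.Icc 0 1))
    (hθt_d : ∀ t ∈ Set.Ioi (0:ℝ), ∀ x ∈ Set.Ioo (0:ℝ) 1,
      HasDerivAt (fun s => θ s x) (θt t x) t)
    (hθ_L2 : ∃ Θ DΘ : ℝ → MeasureTheory.Lp ℝ 2 (MeasureTheory.volume.restrict (Set.Ioo (0:ℝ) 1)),
      (∀ t ∈ Set.Ioi (0:ℝ), HasDerivAt Θ (DΘ t) t) ∧ ContinuousOn DΘ (Set.Ioi 0) ∧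
      ∀ t ∈ Set.Ici (0:ℝ),
        (fun x => θ t x) =ᵐ[MeasureTheory.volume.restrict (Set.Ioo (0:ℝ) 1)] (Θ t : ℝ → ℝ))
    (hθx_d : ∀ t ∈ Set.Ioi (0:ℝ), ∀ x ∈ Set.Icc (0:ℝ) 1,
      HasDerivWithinAt (fun y => θ t y) (θx t x) (Set.Icc 0 1) x)
    (hθxx_d : ∀ t ∈ Set.Ioi (0:ℝ), ∀ x ∈ Set.Icc (0:ℝ) 1,
      HasDerivWithinAt (fun y => θx t y) (θxx t x) (Set.Icc 0 1) x)
    (hθx_int : ∀ t ∈ Set.Ioi (0:ℝ), IntervalIntegrable (fun x => (θx t x)^2) MeasureTheory.volume 0 1)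
    (hθxx_int : ∀ t ∈ Set.Ioi (0:ℝ), IntervalIntegrable (fun x => (θxx t x)^2) MeasureTheory.volume 0 1)
    (hpde1 : ∀ t ∈ Set.Ioi (0:ℝ), ∀ x ∈ Set.Ioo (0:ℝ) 1,
      utt t x = c^2 * uxx t x + σ * uxxt t x - μ * ut t x - b * θx t x + f t x)
    (hpde2 : ∀ t ∈ Set.Ioi (0:ℝ), ∀ x ∈ Set.Ioo (0:ℝ) 1,
      θt t x = k * θxx t x - lam * uxt t x)
    (hbc0 : ∀ t ∈ Set.Ioi (0:ℝ), u t 0 = 0)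
    (hbc1 : ∀ t ∈ Set.Ioi (0:ℝ), ux t 1 = -a * ut t 1)
    (hbcθ : ∀ t ∈ Set.Ioi (0:ℝ), θ t 0 = 0 ∧ θ t 1 = 0)
    (hf_c : ContinuousOn (fun p : ℝ × ℝ => f p.1 p.2) (Set.Ioi 0 ×ˢ Set.Ioo 0 1))
    (hf_L2 : ∃ F : ℝ → MeasureTheory.Lp ℝ 2 (MeasureTheory.volume.restrict (Set.Ioo (0:ℝ) 1)),
      ContinuousOn F (Set.Ici 0) ∧ ∀ t ∈ Set.Ici (0:ℝ),
        (fun x => f t x) =ᵐ[MeasureTheory.volume.restrict (Set.Ioo (0:ℝ) 1)] (F t : ℝ → ℝ))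
    (hf_int : ∀ t ∈ Set.Ici (0:ℝ), IntervalIntegrable (fun x => (f t x)^2) MeasureTheory.volume 0 1) :
    ∀ t ∈ Set.Ioi (0:ℝ),
      HasDerivAt (fun s => (1/2) * (∫ x in (0:ℝ)..1, (ut s x)^2) + (c^2/2) * (∫ x in (0:ℝ)..1, (ux s x)^2) +
        (b/(2*lam)) * (∫ x in (0:ℝ)..1, (θ s x)^2) + (a*σ/2) * (ut s 1)^2)
        (-μ * (∫ x in (0:ℝ)..1, (ut t x)^2) + (∫ x in (0:ℝ)..1, ut t x * f t x) -
          σ * (∫ x in (0:ℝ)..1, (uxt t x)^2) - a * c^2 * (ut t 1)^2 -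
          (k*b/lam) * (∫ x in (0:ℝ)..1, (θx t x)^2)) t :=
  stmt14_general a c μ σ b k lam hlam u ut ux utt uxx uxt uxxt θ θt θx θxx f hut_c hux_c hutt_c
    huxx_c huxt_c hut_d hutt_d huxx_d huxt_d hutH2 huxxt_int hθt_d hθ_L2 hθx_d hθxx_d hθxx_int hpde1
    hpde2 hbc0 hbc1 hbcθ hf_c hf_int
end

section
/- Let a, c > 0, μ ≥ 0, σ, b, k, λ > 0 and r > 0, set B := aσ·(exp(r)(1−ac) + exp(−r)(1+ac)), let R > 0, and let M > 0 satisfy M > R − 2exp(−r) and M > −B/(aσ). Define V(u,w,θ) := Φ(u,w) + R·W(u,w) + M·E(u,w,θ), C₁ := min( (M−R)/2 + exp(−r), c²·(M/2 + exp(−r)), bM/(2λ), (aσM + B)/2, Rσ²/4 ) and C₂ := max( M/2 + exp(r) + R, c²·(M/2 + exp(r)), bM/(2λ), (aσM + B)/2, Rσ² ). Then 0 < C₁ ≤ C₂ and for all u ∈ H²(0,1), w ∈ C⁰([0,1]) ∩ H¹(0,1), θ ∈ L²(0,1): C₁·(‖w‖₂² + ‖u_x‖₂² + ‖θ‖₂²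 + w²(1) + ‖u_xx‖₂²) ≤ V(u,w,θ) ≤ C₂·(‖w‖₂² + ‖u_x‖₂² + ‖θ‖₂² + w²(1) + ‖u_xx‖₂²). -/
/-! On `(0,1)` the weights `exp (± r x)` lie between `exp (-r)` and `exp r`, and
`(w + c u_x)² + (w - c u_x)² = 2 w² + 2 c² u_x²`, so the weighted part of `Φ` lies between
`exp (-r)` and `exp r` times `‖w‖² + c² ‖u_x‖²`. Similarly
`σ² u_xx² / 2 - w² ≤ (w - σ u_xx)² ≤ 2 w² + 2 σ² u_xx²` controls `W`. Adding `M E` turns `V` into a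
combination of the five squared norms whose coefficients are bounded below by `C₁` and above by
`C₂`. -/

open MeasureTheory Set

lemma sq_sub_mul_le (x y s : ℝ) : (x - s * y) ^ 2 ≤ 2 * x ^ 2 + 2 * s ^ 2 * y ^ 2 := by
  nlinarith [sq_nonneg (x + s * y)]

lemma half_sq_mul_sq_le (x y s : ℝ) : s ^ 2 / 2 * y ^ 2 ≤ (x - s * y) ^ 2 + x ^ 2 := by
  nlinarith [sq_nonneg (x - s / 2 * y)]

lemma le_weighted_parallelogram {m p q : ℝ} (hp : m ≤ p) (hq : m ≤ q) (x y c : ℝ) :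
    m * (2 * x ^ 2 + 2 * c ^ 2 * y ^ 2) ≤ p * (x + c * y) ^ 2 + q * (x - c * y) ^ 2 := by
  nlinarith [mul_nonneg (sub_nonneg.mpr hp) (sq_nonneg (x + c * y)),
    mul_nonneg (sub_nonneg.mpr hq) (sq_nonneg (x - c * y))]

lemma weighted_parallelogram_le {m p q : ℝ} (hp : p ≤ m) (hq : q ≤ m) (x y c : ℝ) :
    p * (x + c * y) ^ 2 + q * (x - c * y) ^ 2 ≤ m * (2 * x ^ 2 + 2 * c ^ 2 * y ^ 2) := by
  nlinarith [mul_nonneg (sub_nonneg.mpr hp) (sq_nonneg (x + c * y)),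
    mul_nonneg (sub_nonneg.mpr hq) (sq_nonneg (x - c * y))]

lemma min_mul_sum_le {k₁ k₂ k₃ k₄ k₅ x₁ x₂ x₃ x₄ x₅ : ℝ} (h₁ : 0 ≤ x₁) (h₂ : 0 ≤ x₂)
    (h₃ : 0 ≤ x₃) (h₄ : 0 ≤ x₄) (h₅ : 0 ≤ x₅) :
    min k₁ (min k₂ (min k₃ (min k₄ k₅))) * (x₁ + x₂ + x₃ + x₄ + x₅) ≤
      k₁ * x₁ + k₂ * x₂ + k₃ * x₃ + k₄ * x₄ + k₅ * x₅ := by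
  set k := min k₁ (min k₂ (min k₃ (min k₄ k₅)))
  have hk₁ : k ≤ k₁ := by simp [k]
  have hk₂ : k ≤ k₂ := by simp [k]
  have hk₃ : k ≤ k₃ := by simp [k]
  have hk₄ : k ≤ k₄ := by simp [k]
  have hk₅ : k ≤ k₅ := by simp [k]
  linarith [mul_le_mul_of_nonneg_right hk₁ h₁, mul_le_mul_of_nonneg_right hk₂ h₂,
    mul_le_mul_of_nonneg_right hk₃ h₃, mul_le_mul_of_nonneg_right hk₄ h₄,
    mul_le_mul_of_nonneg_right hk₅ h₅]

lemma sum_le_max_mul_sum {k₁ k₂ k₃ k₄ k₅ x₁ x₂ x₃ x₄ x₅ : ℝ} (h₁ : 0 ≤ x₁) (h₂ : 0 ≤ x₂)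
    (h₃ : 0 ≤ x₃) (h₄ : 0 ≤ x₄) (h₅ : 0 ≤ x₅) :
    k₁ * x₁ + k₂ * x₂ + k₃ * x₃ + k₄ * x₄ + k₅ * x₅ ≤
      max k₁ (max k₂ (max k₃ (max k₄ k₅))) * (x₁ + x₂ + x₃ + x₄ + x₅) := by
  set k := max k₁ (max k₂ (max k₃ (max k₄ k₅)))
  have hk₁ : k₁ ≤ k := by simp [k]
  have hk₂ : k₂ ≤ k := by simp [k]
  have hk₃ : k₃ ≤ k := by simp [k]
  have hk₄ : k₄ ≤ k := by simp [k]
  have hk₅ : k₅ ≤ k := by simp [k]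
  linarith [mul_le_mul_of_nonneg_right hk₁ h₁, mul_le_mul_of_nonneg_right hk₂ h₂,
    mul_le_mul_of_nonneg_right hk₃ h₃, mul_le_mul_of_nonneg_right hk₄ h₄,
    mul_le_mul_of_nonneg_right hk₅ h₅]

lemma Real.exp_mem_Icc_of_abs_le {y r : ℝ} (h : |y| ≤ r) :
    Real.exp y ∈ Icc (Real.exp (-r)) (Real.exp r) :=
  ⟨Real.exp_le_exp.mpr (neg_le_of_abs_le h), Real.exp_le_exp.mpr (le_of_abs_le h)⟩

lemma ContinuousOn.memLp_restrict_Icc {f : ℝ → ℝ} {a b : ℝ} (hf : ContinuousOn f (Icc a b))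
    (p : ENNReal) : MemLp f p (volume.restrict (Icc a b)) := by
  obtain ⟨C, hC⟩ := isCompact_Icc.exists_bound_of_continuousOn hf
  exact MemLp.of_bound (hf.aestronglyMeasurable measurableSet_Icc) C
    (ae_restrict_of_forall_mem measurableSet_Icc hC)

section

variable {α : Type*} [MeasurableSpace α] {μ : Measure α} {f g : α → ℝ}

lemma integral_mul_sq_add_mul_sq (hf : MemLp f 2 μ) (hg : MemLp g 2 μ) (a b : ℝ) :
    ∫ x, (a * f x ^ 2 + b * g x ^ 2) ∂μ = a * ∫ x, f x ^ 2 ∂μ + b * ∫ x, g x ^ 2 ∂μ := by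
  rw [integral_add (hf.integrable_sq.const_mul a) (hg.integrable_sq.const_mul b),
    integral_const_mul, integral_const_mul]

lemma integral_sq_sub_mul_bounds (hf : MemLp f 2 μ) (hg : MemLp g 2 μ) (s : ℝ) :
    s ^ 2 / 2 * ∫ x, g x ^ 2 ∂μ - ∫ x, f x ^ 2 ∂μ ≤ ∫ x, (f x - s * g x) ^ 2 ∂μ ∧
      ∫ x, (f x - s * g x) ^ 2 ∂μ ≤ 2 * ∫ x, f x ^ 2 ∂μ + 2 * s ^ 2 * ∫ x, g x ^ 2 ∂μ := by
  have hD : Integrable (fun x => (f x - s * g x) ^ 2) μ :=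
    (hf.sub (hg.const_mul s)).integrable_sq
  constructor
  · have h : ∫ x, s ^ 2 / 2 * g x ^ 2 ∂μ ≤ ∫ x, ((f x - s * g x) ^ 2 + f x ^ 2) ∂μ :=
      integral_mono (hg.integrable_sq.const_mul _) (hD.add hf.integrable_sq)
        fun x => half_sq_mul_sq_le (f x) (g x) s
    rw [integral_const_mul, integral_add hD hf.integrable_sq] at h
    linarith
  · rw [← integral_mul_sq_add_mul_sq hf hg]
    exact integral_mono hD ((hf.integrable_sq.const_mul 2).add (hg.integrable_sq.const_mul _))
      fun x => sq_sub_mul_le (f x) (g x) s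

lemma integral_weighted_parallelogram_bounds {p q : α → ℝ} {m m' : ℝ}
    (hp : AEStronglyMeasurable p μ) (hq : AEStronglyMeasurable q μ)
    (hpb : ∀ᵐ x ∂μ, p x ∈ Icc m m') (hqb : ∀ᵐ x ∂μ, q x ∈ Icc m m')
    (hf : MemLp f 2 μ) (hg : MemLp g 2 μ) (c : ℝ) :
    m * (2 * ∫ x, f x ^ 2 ∂μ + 2 * c ^ 2 * ∫ x, g x ^ 2 ∂μ) ≤
        ∫ x, p x * (f x + c * g x) ^ 2 ∂μ + ∫ x, q x * (f x - c * g x) ^ 2 ∂μ ∧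
      ∫ x, p x * (f x + c * g x) ^ 2 ∂μ + ∫ x, q x * (f x - c * g x) ^ 2 ∂μ ≤
        m' * (2 * ∫ x, f x ^ 2 ∂μ + 2 * c ^ 2 * ∫ x, g x ^ 2 ∂μ) := by
  have hnorm {p : α → ℝ} (hpb : ∀ᵐ x ∂μ, p x ∈ Icc m m') : ∀ᵐ x ∂μ, ‖p x‖ ≤ |m| + |m'| := by
    filter_upwards [hpb] with x ⟨hm, hm'⟩
    rw [Real.norm_eq_abs, abs_le]
    constructor <;> linarith [neg_abs_le m, le_abs_self m', abs_nonneg m, abs_nonneg m']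
  have hP : Integrable (fun x => p x * (f x + c * g x) ^ 2) μ :=
    (hf.add (hg.const_mul c)).integrable_sq.bdd_mul hp (hnorm hpb)
  have hQ : Integrable (fun x => q x * (f x - c * g x) ^ 2) μ :=
    (hf.sub (hg.const_mul c)).integrable_sq.bdd_mul hq (hnorm hqb)
  have hK : Integrable (fun x => 2 * f x ^ 2 + 2 * c ^ 2 * g x ^ 2) μ :=
    (hf.integrable_sq.const_mul 2).add (hg.integrable_sq.const_mul _)
  rw [← integral_add hP hQ, ← integral_mul_sq_add_mul_sq hf hg, ← integral_const_mul,
    ← integral_const_mul]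
  constructor
  · refine integral_mono_ae (hK.const_mul m) (hP.add hQ) ?_
    filter_upwards [hpb, hqb] with x hpx hqx
    exact le_weighted_parallelogram hpx.1 hqx.1 (f x) (g x) c
  · refine integral_mono_ae (hP.add hQ) (hK.const_mul m') ?_
    filter_upwards [hpb, hqb] with x hpx hqx
    exact weighted_parallelogram_le hpx.2 hqx.2 (f x) (g x) c

end

theorem stmt17_general (a c σ b lam r B R M C₁ C₂ : ℝ)
    (ha : 0 < a) (hc : 0 < c) (hσ : 0 < σ) (hb : 0 < b)
    (hlam : 0 < lam) (hr : 0 < r)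
    (hR : 0 < R) (hM : 0 < M)
    (hM1 : M > R - 2*Real.exp (-r)) (hM2 : M > -B/(a*σ))
    (hC₁ : C₁ = min ((M - R)/2 + Real.exp (-r)) (min (c^2*(M/2 + Real.exp (-r)))
      (min (b*M/(2*lam)) (min ((a*σ*M + B)/2) (R*σ^2/4)))))
    (hC₂ : C₂ = max (M/2 + Real.exp r + R) (max (c^2*(M/2 + Real.exp r))
      (max (b*M/(2*lam)) (max ((a*σ*M + B)/2) (R*σ^2))))) :
    0 < C₁ ∧ C₁ ≤ C₂ ∧
    ∀ (u ux uxx w wx θ : ℝ → ℝ)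
      (hux_d : ∀ x ∈ Set.Icc (0:ℝ) 1, HasDerivWithinAt u (ux x) (Set.Icc 0 1) x)
      (huxx_d : ∀ x ∈ Set.Icc (0:ℝ) 1, HasDerivWithinAt ux (uxx x) (Set.Icc 0 1) x)
      (hu_L2 : MeasureTheory.MemLp u 2 (MeasureTheory.volume.restrict (Set.Ioo (0:ℝ) 1)))
      (hux_L2 : MeasureTheory.MemLp ux 2 (MeasureTheory.volume.restrict (Set.Ioo (0:ℝ) 1)))
      (huxx_L2 : MeasureTheory.MemLp uxx 2 (MeasureTheory.volume.restrict (Set.Ioo (0:ℝ) 1)))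
      (hw_c : ContinuousOn w (Set.Icc 0 1))
      (hwx_d : ∀ x ∈ Set.Icc (0:ℝ) 1, HasDerivWithinAt w (wx x) (Set.Icc 0 1) x)
      (hwx_L2 : MeasureTheory.MemLp wx 2 (MeasureTheory.volume.restrict (Set.Ioo (0:ℝ) 1)))
      (hθ_L2 : MeasureTheory.MemLp θ 2 (MeasureTheory.volume.restrict (Set.Ioo (0:ℝ) 1))),
      C₁ * ((∫ x in (0:ℝ)..1, (w x)^2) + (∫ x in (0:ℝ)..1, (ux x)^2) + (∫ x in (0:ℝ)..1, (θ x)^2) + (w 1)^2 + (∫ x in (0:ℝ)..1, (uxx x)^2)) ≤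
        ((1/2) * (∫ x in (0:ℝ)..1, Real.exp (r*x) * (w x + c * ux x)^2) +
      (1/2) * (∫ x in (0:ℝ)..1, Real.exp (-(r*x)) * (w x - c * ux x)^2) + (B/2) * (w 1)^2 +
          R * ((1/2) * (∫ x in (0:ℝ)..1, (w x - σ * uxx x)^2)) + M * ((1/2) * (∫ x in (0:ℝ)..1, (w x)^2) + (c^2/2) * (∫ x in (0:ℝ)..1, (ux x)^2) + (b/(2*lam)) * (∫ x in (0:ℝ)..1, (θ x)^2) + (a*σ/2) * (w 1)^2)) ∧
        ((1/2) * (∫ x in (0:ℝ)..1, Real.exp (r*x) * (w x + c * ux x)^2) +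
      (1/2) * (∫ x in (0:ℝ)..1, Real.exp (-(r*x)) * (w x - c * ux x)^2) + (B/2) * (w 1)^2 +
          R * ((1/2) * (∫ x in (0:ℝ)..1, (w x - σ * uxx x)^2)) + M * ((1/2) * (∫ x in (0:ℝ)..1, (w x)^2) + (c^2/2) * (∫ x in (0:ℝ)..1, (ux x)^2) + (b/(2*lam)) * (∫ x in (0:ℝ)..1, (θ x)^2) + (a*σ/2) * (w 1)^2)) ≤
        C₂ * ((∫ x in (0:ℝ)..1, (w x)^2) + (∫ x in (0:ℝ)..1, (ux x)^2) + (∫ x in (0:ℝ)..1, (θ x)^2) + (w 1)^2 + (∫ x in (0:ℝ)..1, (uxx x)^2)) := by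
  have hBM : 0 < a * σ * M + B := by
    have := (div_lt_iff₀ (mul_pos ha hσ)).mp hM2
    linarith
  subst hC₁ hC₂
  refine ⟨?_, ?_, ?_⟩
  · simp only [lt_min_iff]
    refine ⟨by linarith, by positivity, by positivity, half_pos hBM, by positivity⟩
  · -- both lists contain `b * M / (2 * lam)`
    exact (min_le_right _ _).trans <| (min_le_right _ _).trans <| (min_le_left _ _).trans <|
      (le_max_left _ _).trans <| (le_max_right _ _).trans (le_max_right _ _)
  intro u ux uxx w wx θ _ _ _ hux_L2 huxx_L2 hw_c _ _ _
  simp only [intervalIntegral.integral_of_le zero_le_one, integral_Ioc_eq_integral_Ioo]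
  have hw_L2 : MemLp w 2 (volume.restrict (Ioo (0:ℝ) 1)) :=
    (hw_c.memLp_restrict_Icc 2).mono_measure (Measure.restrict_mono Ioo_subset_Icc_self le_rfl)
  have hrx : ∀ x ∈ Ioo (0:ℝ) 1, |r * x| ≤ r := fun x hx => by
    rw [abs_of_pos (mul_pos hr hx.1)]
    exact mul_le_of_le_one_right hr.le hx.2.le
  obtain ⟨hΦ_lo, hΦ_hi⟩ := integral_weighted_parallelogram_bounds
    (by fun_prop : Continuous fun x => Real.exp (r * x)).aestronglyMeasurable
    (by fun_prop : Continuous fun x => Real.exp (-(r * x))).aestronglyMeasurable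
    (ae_restrict_of_forall_mem measurableSet_Ioo fun x hx =>
      Real.exp_mem_Icc_of_abs_le (hrx x hx))
    (ae_restrict_of_forall_mem measurableSet_Ioo fun x hx =>
      Real.exp_mem_Icc_of_abs_le ((abs_neg _).trans_le (hrx x hx)))
    hw_L2 hux_L2 c
  obtain ⟨hW_lo, hW_hi⟩ := integral_sq_sub_mul_bounds hw_L2 huxx_L2 σ
  have hsq_nonneg (f : ℝ → ℝ) : 0 ≤ ∫ x in Ioo (0:ℝ) 1, f x ^ 2 :=
    setIntegral_nonneg measurableSet_Ioo fun x _ => sq_nonneg _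
  have h₁ := hsq_nonneg w
  have h₂ := hsq_nonneg ux
  have h₃ := hsq_nonneg θ
  have h₄ := sq_nonneg (w 1)
  have h₅ := hsq_nonneg uxx
  constructor
  · refine (min_mul_sum_le h₁ h₂ h₃ h₄ h₅).trans ?_
    linear_combination (1 / 2) * hΦ_lo + (R / 2) * hW_lo
  · refine le_trans ?_ (sum_le_max_mul_sum h₁ h₂ h₃ h₄ h₅)
    linear_combination (1 / 2) * hΦ_hi + (R / 2) * hW_hi

theorem stmt17 (a c μ σ b k lam r B R M C₁ C₂ : ℝ)
    (ha : 0 < a) (hc : 0 < c) (hμ : 0 ≤ μ) (hσ : 0 < σ) (hb : 0 < b) (hk : 0 < k)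
    (hlam : 0 < lam) (hr : 0 < r)
    (hB : B = a*σ*(Real.exp r * (1 - a*c) + Real.exp (-r) * (1 + a*c)))
    (hR : 0 < R) (hM : 0 < M)
    (hM1 : M > R - 2*Real.exp (-r)) (hM2 : M > -B/(a*σ))
    (hC₁ : C₁ = min ((M - R)/2 + Real.exp (-r)) (min (c^2*(M/2 + Real.exp (-r)))
      (min (b*M/(2*lam)) (min ((a*σ*M + B)/2) (R*σ^2/4)))))
    (hC₂ : C₂ = max (M/2 + Real.exp r + R) (max (c^2*(M/2 + Real.exp r))
      (max (b*M/(2*lam)) (max ((a*σ*M + B)/2) (R*σ^2))))) :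
    0 < C₁ ∧ C₁ ≤ C₂ ∧
    ∀ (u ux uxx w wx θ : ℝ → ℝ)
      (hux_d : ∀ x ∈ Set.Icc (0:ℝ) 1, HasDerivWithinAt u (ux x) (Set.Icc 0 1) x)
      (huxx_d : ∀ x ∈ Set.Icc (0:ℝ) 1, HasDerivWithinAt ux (uxx x) (Set.Icc 0 1) x)
      (hu_L2 : MeasureTheory.MemLp u 2 (MeasureTheory.volume.restrict (Set.Ioo (0:ℝ) 1)))
      (hux_L2 : MeasureTheory.MemLp ux 2 (MeasureTheory.volume.restrict (Set.Ioo (0:ℝ) 1)))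
      (huxx_L2 : MeasureTheory.MemLp uxx 2 (MeasureTheory.volume.restrict (Set.Ioo (0:ℝ) 1)))
      (hw_c : ContinuousOn w (Set.Icc 0 1))
      (hwx_d : ∀ x ∈ Set.Icc (0:ℝ) 1, HasDerivWithinAt w (wx x) (Set.Icc 0 1) x)
      (hwx_L2 : MeasureTheory.MemLp wx 2 (MeasureTheory.volume.restrict (Set.Ioo (0:ℝ) 1)))
      (hθ_L2 : MeasureTheory.MemLp θ 2 (MeasureTheory.volume.restrict (Set.Ioo (0:ℝ) 1))),
      C₁ * ((∫ x in (0:ℝ)..1, (w x)^2) + (∫ x in (0:ℝ)..1, (ux x)^2) + (∫ x in (0:ℝ)..1, (θ x)^2) + (w 1)^2 + (∫ x in (0:ℝ)..1, (uxx x)^2)) ≤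
        ((1/2) * (∫ x in (0:ℝ)..1, Real.exp (r*x) * (w x + c * ux x)^2) +
      (1/2) * (∫ x in (0:ℝ)..1, Real.exp (-(r*x)) * (w x - c * ux x)^2) + (B/2) * (w 1)^2 +
          R * ((1/2) * (∫ x in (0:ℝ)..1, (w x - σ * uxx x)^2)) + M * ((1/2) * (∫ x in (0:ℝ)..1, (w x)^2) + (c^2/2) * (∫ x in (0:ℝ)..1, (ux x)^2) + (b/(2*lam)) * (∫ x in (0:ℝ)..1, (θ x)^2) + (a*σ/2) * (w 1)^2)) ∧
        ((1/2) * (∫ x in (0:ℝ)..1, Real.exp (r*x) * (w x + c * ux x)^2) +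
      (1/2) * (∫ x in (0:ℝ)..1, Real.exp (-(r*x)) * (w x - c * ux x)^2) + (B/2) * (w 1)^2 +
          R * ((1/2) * (∫ x in (0:ℝ)..1, (w x - σ * uxx x)^2)) + M * ((1/2) * (∫ x in (0:ℝ)..1, (w x)^2) + (c^2/2) * (∫ x in (0:ℝ)..1, (ux x)^2) + (b/(2*lam)) * (∫ x in (0:ℝ)..1, (θ x)^2) + (a*σ/2) * (w 1)^2)) ≤
        C₂ * ((∫ x in (0:ℝ)..1, (w x)^2) + (∫ x in (0:ℝ)..1, (ux x)^2) + (∫ x in (0:ℝ)..1, (θ x)^2) + (w 1)^2 + (∫ x in (0:ℝ)..1, (uxx x)^2)) :=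
  stmt17_general a c σ b lam r B R M C₁ C₂ ha hc hσ hb hlam hr hR hM hM1 hM2 hC₁ hC₂
end
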